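/- Let μ ∈ ℝ^p, let Σ and Σ' be p×p positive definite matrices, let r ≥ 1, K = r + 1, let X, W_1, …, W_r be mutually independent with X ~ N_p(μ, Σ) and W_j ~ N_p(0, Σ'), let Q be a K×K orthogonal matrix with first column (q_1, …, q_K)ᵀ, and define X^(k) = q_k X + Σ_{j=1}^{r} Q_{k,j+1} W_j for k = 1, …, K. Let A and B be disjoint subsets of {1, …, K}, and set X^(A) = Σ_{k∈A} q_k X^(k), X^(B) = Σ_{k∈B} q_k X^(k), d_A = Σ_{k∈A} q_k², d_B = Σ_{k∈B} q_k². Then the 2p-dimensional vector (X^(A), X^(B)) is multivariate Gaussian with mean (d_A μ, d_B μ) and block covariance matrix with diagonal blocks d_A² Σ + d_A(1 − d_A) Σ' and d_B² Σ + d_B(1 − d_B) Σ' and off-diagonal blocks d_A d_B (Σ − Σ'). Moreover, if A ∪ B = {1, …, K}, then X^(A) + X^(B) = X almost surely. -/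

import Mathlib

open MeasureTheory ProbabilityTheory Matrix BigOperators

noncomputable section

/-- A measure `ν` on `ι → ℝ` is the multivariate Gaussian distribution with mean vector `m` and
covariance matrix `S` if every linear functional pushes `ν` forward to the one-dimensional
Gaussian distribution with the corresponding mean and variance (Cramér–Wold characterization). -/
def IsGaussianVec {ι : Type*} [Fintype ι] (ν : Measure (ι → ℝ)) (m : ι → ℝ)
    (S : Matrix ι ι ℝ) : Prop :=
  ∀ l : ι → ℝ,
    ν.map (fun x => ∑ i, l i * x i) =
      gaussianReal (∑ i, l i * m i) (∑ i, ∑ j, l i * S i j * l j).toNNReal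

/-
Write `Z = (X, W₁, …, W_r)`, so that every fold is `X⁽ᵏ⁾ = ∑ⱼ Q_{kj} Z_j` and
`X⁽ᴬ⁾ = ∑ⱼ α_j Z_j` with `α = wᵀQ`, where `w_k = q_k` for `k ∈ A` and `0` otherwise (likewise `β`
for `B`). A linear functional `(l_A, l_B)` of `(X⁽ᴬ⁾, X⁽ᴮ⁾)` is then `∑ⱼ ⟨α_j l_A + β_j l_B, Z_j⟩`,
a sum of independent real Gaussians. Since the rows of `Q` are orthonormal, `α ⬝ α = d_A`,
`α ⬝ β = 0` and `β ⬝ β = d_B`, while `α₀ = d_A` and `β₀ = d_B`; this yields the block covariance.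
If `A ∪ B` is everything, `α + β = Qᵀq = e₀` by orthonormality of the columns, so
`X⁽ᴬ⁾ + X⁽ᴮ⁾ = Z₀ = X` pointwise.
-/

open scoped NNReal

lemma isGaussianVec_iff {ι : Type*} [Fintype ι] {ν : Measure (ι → ℝ)} {m : ι → ℝ}
    {S : Matrix ι ι ℝ} :
    IsGaussianVec ν m S ↔
      ∀ l : ι → ℝ, ν.map (l ⬝ᵥ ·) = gaussianReal (l ⬝ᵥ m) (l ⬝ᵥ S *ᵥ l).toNNReal := by
  simp only [IsGaussianVec, dotProduct, mulVec, Finset.mul_sum, mul_assoc]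

section GaussianSums

variable {Ω : Type*} [MeasurableSpace Ω] {P : Measure Ω} [IsProbabilityMeasure P]

lemma map_finsetSum_eq_gaussianReal {ι : Type*} {Y : ι → Ω → ℝ} (hY : iIndepFun Y P)
    (hYm : ∀ j, Measurable (Y j)) {m : ι → ℝ} {v : ι → ℝ≥0}
    (hlaw : ∀ j, P.map (Y j) = gaussianReal (m j) (v j)) (s : Finset ι) :
    P.map (∑ j ∈ s, Y j) = gaussianReal (∑ j ∈ s, m j) (∑ j ∈ s, v j) := by
  classical
  induction s using Finset.induction_on with
  | empty =>
    simp only [Finset.sum_empty, gaussianReal_zero_var]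
    exact (Measure.map_const P 0).trans (by simp)
  | insert a s ha ih =>
    rw [Finset.sum_insert ha, Finset.sum_insert ha, Finset.sum_insert ha]
    exact gaussianReal_add_gaussianReal_of_indepFun
      (hY.indepFun_finsetSum_of_notMem hYm ha).symm (hlaw a) ih

lemma map_sum_dotProduct_eq_gaussianReal {ι κ : Type*} [Fintype ι] [Fintype κ]
    {Z : ι → Ω → κ → ℝ} (hZ : iIndepFun Z P) (hZm : ∀ j, Measurable (Z j))
    {M : ι → κ → ℝ} {C : ι → Matrix κ κ ℝ} (hC : ∀ j, (C j).PosSemidef)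
    (hlaw : ∀ j, IsGaussianVec (P.map (Z j)) (M j) (C j)) (c : ι → κ → ℝ) :
    P.map (fun ω => ∑ j, c j ⬝ᵥ Z j ω) =
      gaussianReal (∑ j, c j ⬝ᵥ M j) (∑ j, c j ⬝ᵥ C j *ᵥ c j).toNNReal := by
  have hgm : ∀ j, Measurable (c j ⬝ᵥ · : (κ → ℝ) → ℝ) := fun j => by fun_prop
  have hsum : (fun ω => ∑ j, c j ⬝ᵥ Z j ω) = ∑ j, (c j ⬝ᵥ ·) ∘ Z j := by
    ext ω; simp
  have hvar : ∀ j, 0 ≤ c j ⬝ᵥ C j *ᵥ c j := fun j => by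
    simpa using (hC j).dotProduct_mulVec_nonneg (c j)
  rw [hsum, Real.toNNReal_sum_of_nonneg fun j _ => hvar j]
  refine map_finsetSum_eq_gaussianReal (hZ.comp _ hgm) (fun j => (hgm j).comp (hZm j))
    (fun j => ?_) _
  rw [← Measure.map_map (hgm j) (hZm j), isGaussianVec_iff.mp (hlaw j)]

end GaussianSums

section CollapseWeights

variable {R κ ι : Type*} [CommRing R]

lemma vecMul_dotProduct_vecMul_of_mul_transpose_eq_one [Fintype κ] [DecidableEq κ] [Fintype ι]
    {Q : Matrix κ ι R} (hQ : Q * Qᵀ = 1) (a b : κ → R) : (a ᵥ* Q) ⬝ᵥ (b ᵥ* Q) = a ⬝ᵥ b := by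
  rw [← dotProduct_mulVec, ← transpose_transpose Q, vecMul_transpose, transpose_transpose,
    mulVec_mulVec, hQ, one_mulVec]

variable [DecidableEq κ]

def collapseWeights (Q : Matrix κ ι R) (j : ι) (s : Finset κ) : κ → R :=
  fun k => if k ∈ s then Q k j else 0

lemma collapseWeights_dotProduct [Fintype κ] (Q : Matrix κ ι R) (j : ι) (s t : Finset κ) :
    collapseWeights Q j s ⬝ᵥ collapseWeights Q j t = ∑ k ∈ s ∩ t, Q k j ^ 2 := by
  simp only [dotProduct, collapseWeights, ite_mul, zero_mul, mul_ite, mul_zero, ← ite_and,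
    ← Finset.mem_inter, Finset.sum_ite_mem, Finset.univ_inter, sq]
  rw [Finset.inter_comm]

lemma vecMul_collapseWeights_apply_self [Fintype κ] (Q : Matrix κ ι R) (j : ι) (s : Finset κ) :
    (collapseWeights Q j s ᵥ* Q) j = ∑ k ∈ s, Q k j ^ 2 := by
  simp [vecMul, dotProduct, collapseWeights, sq]

lemma collapseWeights_union (Q : Matrix κ ι R) (j : ι) {s t : Finset κ} (h : Disjoint s t) :
    collapseWeights Q j (s ∪ t) = collapseWeights Q j s + collapseWeights Q j t := by
  ext k
  by_cases hs : k ∈ s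
  · simp [collapseWeights, hs, Finset.disjoint_left.mp h hs]
  · simp [collapseWeights, hs]

lemma vecMul_collapseWeights_univ [Fintype κ] [Fintype ι] [DecidableEq ι] {Q : Matrix κ ι R}
    (hQ : Qᵀ * Q = 1) (j : ι) : collapseWeights Q j Finset.univ ᵥ* Q = Pi.single j 1 := by
  ext i
  have := congrFun (congrFun hQ j) i
  simp only [mul_apply, transpose_apply, one_apply] at this
  simp [vecMul, dotProduct, collapseWeights, this, Pi.single_apply, eq_comm]

lemma vecMul_collapseWeights_dotProduct [Fintype κ] [Fintype ι] {Q : Matrix κ ι R}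
    (hQ : Q * Qᵀ = 1) (j : ι) (s t : Finset κ) :
    (collapseWeights Q j s ᵥ* Q) ⬝ᵥ (collapseWeights Q j t ᵥ* Q) = ∑ k ∈ s ∩ t, Q k j ^ 2 := by
  rw [vecMul_dotProduct_vecMul_of_mul_transpose_eq_one hQ, collapseWeights_dotProduct]

lemma sum_smul_sum_smul_eq_vecMul_collapseWeights [Fintype κ] [Fintype ι] {E : Type*}
    [AddCommGroup E] [Module R E] (Q : Matrix κ ι R) (j₀ : ι) (s : Finset κ) (z : ι → E) :
    ∑ k ∈ s, Q k j₀ • ∑ j, Q k j • z j = ∑ j, (collapseWeights Q j₀ s ᵥ* Q) j • z j := by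
  simp only [vecMul, dotProduct, collapseWeights, Finset.smul_sum, smul_smul, Finset.sum_smul,
    ite_mul, zero_mul, ite_smul, zero_smul]
  rw [Finset.sum_comm]
  simp only [Finset.sum_ite_mem, Finset.univ_inter]

end CollapseWeights

section QuadraticForms

variable {R κ : Type*} [CommRing R] [Fintype κ]

lemma smul_add_smul_dotProduct_mulVec (M : Matrix κ κ R) (a b : R) (u v : κ → R) :
    (a • u + b • v) ⬝ᵥ M *ᵥ (a • u + b • v) =
      (a * a) * (u ⬝ᵥ M *ᵥ u) + (a * b) * (u ⬝ᵥ M *ᵥ v + v ⬝ᵥ M *ᵥ u) +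
        (b * b) * (v ⬝ᵥ M *ᵥ v) := by
  simp only [mulVec_add, mulVec_smul, dotProduct_add, add_dotProduct, dotProduct_smul,
    smul_dotProduct, smul_eq_mul]
  ring

lemma sum_quadForm_collapse {n : ℕ} (S S' : Matrix κ κ R) (lA lB : κ → R)
    {α β : Fin (n + 1) → R} {dA dB : R} (hα₀ : α 0 = dA) (hβ₀ : β 0 = dB)
    (hαα : α ⬝ᵥ α = dA) (hαβ : α ⬝ᵥ β = 0) (hββ : β ⬝ᵥ β = dB) :
    ∑ j, (α j • lA + β j • lB) ⬝ᵥ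
        (Fin.cons S fun _ => S' : Fin (n + 1) → Matrix κ κ R) j *ᵥ (α j • lA + β j • lB) =
      Sum.elim lA lB ⬝ᵥ
        fromBlocks (dA ^ 2 • S + (dA * (1 - dA)) • S') ((dA * dB) • (S - S'))
          ((dA * dB) • (S - S')) (dB ^ 2 • S + (dB * (1 - dB)) • S') *ᵥ Sum.elim lA lB := by
  simp only [dotProduct, Fin.sum_univ_succ] at hαα hαβ hββ
  simp only [Fin.sum_univ_succ, Fin.cons_zero, Fin.cons_succ, smul_add_smul_dotProduct_mulVec,
    Finset.sum_add_distrib, ← Finset.sum_mul, fromBlocks_mulVec, Sum.elim_comp_inl,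
    Sum.elim_comp_inr, sumElim_dotProduct_sumElim, add_mulVec, smul_mulVec, sub_mulVec,
    dotProduct_add, dotProduct_smul, dotProduct_sub, smul_eq_mul, hα₀, hβ₀]
  rw [hα₀] at hαα hαβ
  rw [hβ₀] at hαβ hββ
  linear_combination (lA ⬝ᵥ S' *ᵥ lA) * hαα + (lA ⬝ᵥ S' *ᵥ lB + lB ⬝ᵥ S' *ᵥ lA) * hαβ +
    (lB ⬝ᵥ S' *ᵥ lB) * hββ

end QuadraticForms

lemma isGaussianVec_map_sumElim_sum_smul {Ω κ : Type*} [MeasurableSpace Ω] {P : Measure Ω}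
    [IsProbabilityMeasure P] [Fintype κ] {n : ℕ} {Z : Fin (n + 1) → Ω → κ → ℝ}
    (hZ : iIndepFun Z P) (hZm : ∀ j, Measurable (Z j)) {μ : κ → ℝ} {S S' : Matrix κ κ ℝ}
    (hS : S.PosSemidef) (hS' : S'.PosSemidef) (hZ₀ : IsGaussianVec (P.map (Z 0)) μ S)
    (hZsucc : ∀ j : Fin n, IsGaussianVec (P.map (Z j.succ)) 0 S')
    {α β : Fin (n + 1) → ℝ} {dA dB : ℝ} (hα₀ : α 0 = dA) (hβ₀ : β 0 = dB)
    (hαα : α ⬝ᵥ α = dA) (hαβ : α ⬝ᵥ β = 0) (hββ : β ⬝ᵥ β = dB) :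
    IsGaussianVec (P.map fun ω => Sum.elim (∑ j, α j • Z j ω) (∑ j, β j • Z j ω))
      (Sum.elim (dA • μ) (dB • μ))
      (fromBlocks (dA ^ 2 • S + (dA * (1 - dA)) • S') ((dA * dB) • (S - S'))
        ((dA * dB) • (S - S')) (dB ^ 2 • S + (dB * (1 - dB)) • S')) := by
  refine isGaussianVec_iff.mpr fun l => ?_
  obtain ⟨lA, lB, rfl⟩ : ∃ lA lB, l = Sum.elim lA lB := ⟨_, _, (Sum.elim_comp_inl_inr l).symm⟩
  have hmeas : Measurable fun ω => Sum.elim (∑ j, α j • Z j ω) (∑ j, β j • Z j ω) := by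
    refine measurable_pi_iff.mpr ?_
    rintro (i | i) <;>
      simp only [Sum.elim_inl, Sum.elim_inr, Finset.sum_apply, Pi.smul_apply] <;> fun_prop
  have hpair :
      (Sum.elim lA lB ⬝ᵥ ·) ∘ (fun ω => Sum.elim (∑ j, α j • Z j ω) (∑ j, β j • Z j ω)) =
        fun ω => ∑ j, (α j • lA + β j • lB) ⬝ᵥ Z j ω := by
    ext ω
    simp [sumElim_dotProduct_sumElim, dotProduct_sum, add_dotProduct, Finset.sum_add_distrib]
  rw [Measure.map_map (by fun_prop) hmeas, hpair,
    map_sum_dotProduct_eq_gaussianReal hZ hZm (M := Fin.cons μ fun _ => 0)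
      (C := Fin.cons S fun _ => S') (Fin.cases hS fun _ => hS') (Fin.cases hZ₀ hZsucc),
    sum_quadForm_collapse S S' lA lB hα₀ hβ₀ hαα hαβ hββ]
  simp [Fin.sum_univ_succ, sumElim_dotProduct_sumElim, add_dotProduct, hα₀, hβ₀]

theorem collapse_dependent_folds_general
    {Ω : Type*} [MeasurableSpace Ω] (P : Measure Ω) [IsProbabilityMeasure P]
    (p r : ℕ) (μ : Fin p → ℝ)
    (S S' : Matrix (Fin p) (Fin p) ℝ) (hS : S.PosDef) (hS' : S'.PosDef)
    (X : Ω → Fin p → ℝ) (W : Fin r → Ω → Fin p → ℝ)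
    (hXm : Measurable X) (hWm : ∀ j, Measurable (W j))
    (hindep : iIndepFun
      (Fin.cons X W : Fin (r + 1) → Ω → Fin p → ℝ) P)
    (hX : IsGaussianVec (P.map X) μ S)
    (hW : ∀ j, IsGaussianVec (P.map (W j)) (fun _ => 0) S')
    (Q : Matrix (Fin (r + 1)) (Fin (r + 1)) ℝ) (hQ : Qᵀ * Q = 1)
    (Xf : Fin (r + 1) → Ω → Fin p → ℝ)
    (hXf : ∀ k ω i, Xf k ω i = Q k 0 * X ω i + ∑ j : Fin r, Q k j.succ * W j ω i)
    (A B : Finset (Fin (r + 1))) (hAB : Disjoint A B)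
    (XA XB : Ω → Fin p → ℝ)
    (hXA : ∀ ω i, XA ω i = ∑ k ∈ A, Q k 0 * Xf k ω i)
    (hXB : ∀ ω i, XB ω i = ∑ k ∈ B, Q k 0 * Xf k ω i)
    (dA dB : ℝ) (hdA : dA = ∑ k ∈ A, Q k 0 ^ 2) (hdB : dB = ∑ k ∈ B, Q k 0 ^ 2) :
    IsGaussianVec
        (P.map (fun ω => Sum.elim (XA ω) (XB ω)))
        (Sum.elim (fun i => dA * μ i) (fun i => dB * μ i))
        (Matrix.fromBlocks
          (dA ^ 2 • S + (dA * (1 - dA)) • S') ((dA * dB) • (S - S'))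
          ((dA * dB) • (S - S')) (dB ^ 2 • S + (dB * (1 - dB)) • S')) ∧
      (A ∪ B = Finset.univ → ∀ᵐ ω ∂P, ∀ i, XA ω i + XB ω i = X ω i) := by
  set Z : Fin (r + 1) → Ω → Fin p → ℝ := Fin.cons X W
  have hcollapse : ∀ (s : Finset (Fin (r + 1))) (Y : Ω → Fin p → ℝ),
      (∀ ω i, Y ω i = ∑ k ∈ s, Q k 0 * Xf k ω i) →
        Y = fun ω => ∑ j, (collapseWeights Q 0 s ᵥ* Q) j • Z j ω := by
    intro s Y hY
    ext ω i
    rw [← sum_smul_sum_smul_eq_vecMul_collapseWeights]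
    simp [hY, hXf, Fin.sum_univ_succ, mul_add, Z]
  obtain rfl := hcollapse A XA hXA
  obtain rfl := hcollapse B XB hXB
  have hQQ : Q * Qᵀ = 1 := mul_eq_one_comm.mp hQ
  refine ⟨?_, fun hU => Filter.Eventually.of_forall fun ω => congrFun ?_⟩
  · refine isGaussianVec_map_sumElim_sum_smul hindep (Fin.cases hXm hWm) hS.posSemidef
      hS'.posSemidef hX hW ((vecMul_collapseWeights_apply_self Q 0 A).trans hdA.symm)
      ((vecMul_collapseWeights_apply_self Q 0 B).trans hdB.symm) ?_ ?_ ?_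
    · simpa [hdA] using vecMul_collapseWeights_dotProduct hQQ 0 A A
    · simpa [Finset.disjoint_iff_inter_eq_empty.mp hAB] using
        vecMul_collapseWeights_dotProduct hQQ 0 A B
    · simpa [hdB] using vecMul_collapseWeights_dotProduct hQQ 0 B B
  · have hweights :
        collapseWeights Q 0 A ᵥ* Q + collapseWeights Q 0 B ᵥ* Q = Pi.single 0 1 := by
      rw [← add_vecMul, ← collapseWeights_union _ _ hAB, hU, vecMul_collapseWeights_univ hQ]
    have hsum : ∑ j, (collapseWeights Q 0 A ᵥ* Q) j • Z j ω +
        ∑ j, (collapseWeights Q 0 B ᵥ* Q) j • Z j ω = X ω := by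
      rw [← Finset.sum_add_distrib]
      simp only [← add_smul, ← Pi.add_apply (collapseWeights Q 0 A ᵥ* Q), hweights]
      simp [Pi.single_apply, Z]
    exact hsum

/-- Corollary 2 (collapsing disjoint subsets of the `K = r + 1` dependent folds of Theorem 2):
with `X⁽ᵏ⁾ = q_k X + ∑_j Q_{k,j+1} W_j`, `X⁽ᴬ⁾ = ∑_{k∈A} q_k X⁽ᵏ⁾`, `d_A = ∑_{k∈A} q_k²`
(similarly for `B` disjoint from `A`), the pair `(X⁽ᴬ⁾, X⁽ᴮ⁾)` is jointly Gaussian with mean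
`(d_A μ, d_B μ)`, diagonal covariance blocks `d_A² S + d_A(1−d_A) S'` and
`d_B² S + d_B(1−d_B) S'`, and off-diagonal blocks `d_A d_B (S − S')`; and if `A ∪ B` is
everything, `X⁽ᴬ⁾ + X⁽ᴮ⁾ = X` almost surely. -/
theorem collapse_dependent_folds
    {Ω : Type*} [MeasurableSpace Ω] (P : Measure Ω) [IsProbabilityMeasure P]
    (p r : ℕ) (hr : 1 ≤ r) (μ : Fin p → ℝ)
    (S S' : Matrix (Fin p) (Fin p) ℝ) (hS : S.PosDef) (hS' : S'.PosDef)
    (X : Ω → Fin p → ℝ) (W : Fin r → Ω → Fin p → ℝ)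
    (hXm : Measurable X) (hWm : ∀ j, Measurable (W j))
    (hindep : iIndepFun
      (Fin.cons X W : Fin (r + 1) → Ω → Fin p → ℝ) P)
    (hX : IsGaussianVec (P.map X) μ S)
    (hW : ∀ j, IsGaussianVec (P.map (W j)) (fun _ => 0) S')
    (Q : Matrix (Fin (r + 1)) (Fin (r + 1)) ℝ) (hQ : Qᵀ * Q = 1)
    (Xf : Fin (r + 1) → Ω → Fin p → ℝ)
    (hXf : ∀ k ω i, Xf k ω i = Q k 0 * X ω i + ∑ j : Fin r, Q k j.succ * W j ω i)
    (A B : Finset (Fin (r + 1))) (hAB : Disjoint A B)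
    (XA XB : Ω → Fin p → ℝ)
    (hXA : ∀ ω i, XA ω i = ∑ k ∈ A, Q k 0 * Xf k ω i)
    (hXB : ∀ ω i, XB ω i = ∑ k ∈ B, Q k 0 * Xf k ω i)
    (dA dB : ℝ) (hdA : dA = ∑ k ∈ A, Q k 0 ^ 2) (hdB : dB = ∑ k ∈ B, Q k 0 ^ 2) :
    IsGaussianVec
        (P.map (fun ω => Sum.elim (XA ω) (XB ω)))
        (Sum.elim (fun i => dA * μ i) (fun i => dB * μ i))
        (Matrix.fromBlocks
          (dA ^ 2 • S + (dA * (1 - dA)) • S') ((dA * dB) • (S - S'))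
          ((dA * dB) • (S - S')) (dB ^ 2 • S + (dB * (1 - dB)) • S')) ∧
      (A ∪ B = Finset.univ → ∀ᵐ ω ∂P, ∀ i, XA ω i + XB ω i = X ω i) :=
  collapse_dependent_folds_general P p r μ S S' hS hS' X W hXm hWm hindep hX hW Q hQ Xf hXf A B hAB
    XA XB hXA hXB dA dB hdA hdB
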